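/- arXiv:2602.19046 — 4 statements merged into one kernel-verified Lean document; each statement's English description precedes it below -/
import Mathlib

section
/- Let Π_n be the Fourier truncation onto frequencies 0 ≤ k < n on the Hardy space L²₊ of the torus, and R₀(κ) = (-i∂_x + κ)^{-1} on L²₊. For any u ∈ L²(T), any 1 ≤ n ≤ ∞ and any κ ≥ 1, the operator f ↦ u·(Π_n R₀(κ) f) is bounded on L² with operator norm at most √3 · κ^{-1/2} · ‖u‖_{L²}. -/
open scoped ComplexConjugate

noncomputable section

/-- The squared-summed `ℓ²` norm of a sequence of Fourier coefficients
(`= L²` norm of the corresponding function on the torus, by Plancherel). -/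
def l2norm {ι : Type*} (a : ι → ℂ) : ℝ := Real.sqrt (∑' k, ‖a k‖ ^ 2)

/-- The Fourier truncation `Π_n` onto frequencies `0 ≤ k < n` (with `Π_∞ = Π`),
acting on Hardy-space Fourier coefficients. -/
def trunc (n : ℕ∞) (a : ℕ → ℂ) : ℕ → ℂ := fun k => if (k : ℕ∞) < n then a k else 0

/-- The free resolvent `R₀(κ) = (-i∂ₓ + κ)⁻¹` on the Hardy space, as the Fourier
multiplier with symbol `1/(k+κ)`. -/
def res (κ : ℝ) (a : ℕ → ℂ) : ℕ → ℂ := fun k => a k / ((k : ℂ) + κ)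

/-- Fourier coefficients of the product `u · b` of a general `L²(𝕋)` function `u`
(coefficients indexed by `ℤ`) with a Hardy-space function `b`. -/
def mulZ (u : ℤ → ℂ) (b : ℕ → ℂ) : ℤ → ℂ := fun k => ∑' l : ℕ, u (k - (l : ℤ)) * b l

/-- Fourier coefficients of the product `u · b` of two Hardy-space functions. -/
def mulH (u b : ℕ → ℂ) : ℕ → ℂ :=
  fun k => (Finset.range (k + 1)).sum fun l => u (k - l) * b l

/-- Nonnegative Fourier coefficients of the product `conj u · b` for Hardy-space
functions `u, b`: `(ū·b)^(k) = ∑_{l≥0} conj(û(l)) b̂(l+k)` for `k ≥ 0`. -/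
def mulConjH (u b : ℕ → ℂ) : ℕ → ℂ := fun k => ∑' l : ℕ, conj (u l) * b (l + k)


/-! The coefficients of `u · b` are the convolution of `û` with `b̂`, so Young's inequality gives
`‖u b‖_{ℓ²} ≤ ‖u‖_{ℓ²} ‖b‖_{ℓ¹}`. For `b = Π_n R₀(κ) f`, Cauchy–Schwarz bounds `‖b‖_{ℓ¹}` by
`‖f‖_{ℓ²} (∑_{k ≥ 0} (k + κ)⁻²)^{1/2}`, and the telescoping bound `∑_{k ≥ 0} (k + κ)⁻² ≤ 2/κ`
(for `κ ≥ 1`) yields the estimate with `√2` in place of `√3`. All sums are taken in `ℝ≥0∞`,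
where no summability needs to be tracked. -/

open scoped ENNReal

namespace ENNReal

theorem tsum_mul_sq_le {ι : Type*} (a b : ι → ℝ≥0∞) :
    (∑' i, a i * b i) ^ 2 ≤ (∑' i, a i ^ 2) * ∑' i, b i ^ 2 := by
  let _ : MeasurableSpace ι := ⊤
  have h := lintegral_mul_le_Lp_mul_Lq MeasureTheory.Measure.count Real.HolderConjugate.two_two
    (measurable_from_top (f := a)).aemeasurable (measurable_from_top (f := b)).aemeasurable
  simp only [MeasureTheory.lintegral_count, Pi.mul_apply, rpow_two] at h
  calc (∑' i, a i * b i) ^ 2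
      ≤ ((∑' i, a i ^ 2) ^ (1 / 2 : ℝ) * (∑' i, b i ^ 2) ^ (1 / 2 : ℝ)) ^ 2 := by gcongr
    _ = (∑' i, a i ^ 2) * ∑' i, b i ^ 2 := by
      rw [mul_pow, ← rpow_natCast, ← rpow_natCast, ← rpow_mul, ← rpow_mul]
      norm_num

theorem tsum_mul_sq_le_tsum_mul_tsum_sq_mul {ι : Type*} (a w : ι → ℝ≥0∞) :
    (∑' i, a i * w i) ^ 2 ≤ (∑' i, w i) * ∑' i, a i ^ 2 * w i := by
  set r : ι → ℝ≥0∞ := fun i => w i ^ ((2 : ℕ)⁻¹ : ℝ)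
  have hr : ∀ i, r i ^ 2 = w i := fun i => rpow_inv_natCast_pow two_ne_zero (w i)
  have h := tsum_mul_sq_le (fun i => a i * r i) r
  simp only [mul_assoc, ← sq, mul_pow, hr] at h
  rwa [mul_comm (∑' i, w i)]

theorem tsum_sq_tsum_mul_sub_le {G ι : Type*} [AddGroup G] (U : G → ℝ≥0∞) (B : ι → ℝ≥0∞)
    (φ : ι → G) :
    ∑' k, (∑' l, U (k - φ l) * B l) ^ 2 ≤ (∑' l, B l) ^ 2 * ∑' k, U k ^ 2 :=
  calc ∑' k, (∑' l, U (k - φ l) * B l) ^ 2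
      ≤ ∑' k, (∑' l, B l) * ∑' l, U (k - φ l) ^ 2 * B l :=
        ENNReal.tsum_le_tsum fun k => tsum_mul_sq_le_tsum_mul_tsum_sq_mul _ B
    _ = (∑' l, B l) * ∑' l, (∑' k, U (k - φ l) ^ 2) * B l := by
        rw [ENNReal.tsum_mul_left, ENNReal.tsum_comm]
        simp only [ENNReal.tsum_mul_right]
    _ = (∑' l, B l) * ∑' l, (∑' k, U k ^ 2) * B l := by
        congr 1
        refine tsum_congr fun l => ?_
        congr 1
        exact (Equiv.subRight (φ l)).tsum_eq fun k => U k ^ 2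
    _ = (∑' l, B l) ^ 2 * ∑' k, U k ^ 2 := by
        rw [ENNReal.tsum_mul_left]; ring

end ENNReal

theorem tsum_enorm_sq_ne_top {ι E : Type*} [SeminormedAddGroup E] {a : ι → E}
    (ha : Summable fun k => ‖a k‖ ^ 2) : ∑' k, ‖a k‖ₑ ^ 2 ≠ ∞ := by
  simp only [← ofReal_norm, ← ENNReal.ofReal_pow (norm_nonneg _),
    ← ENNReal.ofReal_tsum_of_nonneg (fun k => sq_nonneg ‖a k‖) ha, ENNReal.ofReal_ne_top,
    ne_eq, not_false_eq_true]

-- Also without summability: then the real sum is `0` and the `ℝ≥0∞` sum is `∞`.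
theorem l2norm_eq_sqrt_toReal {ι : Type*} (a : ι → ℂ) :
    l2norm a = √(∑' k, ‖a k‖ₑ ^ 2).toReal := by
  rw [l2norm, ENNReal.tsum_toReal_eq fun k => by finiteness]
  simp [ENNReal.toReal_pow]

theorem enorm_mulZ_le (u : ℤ → ℂ) (b : ℕ → ℂ) (k : ℤ) :
    ‖mulZ u b k‖ₑ ≤ ∑' l : ℕ, ‖u (k - l)‖ₑ * ‖b l‖ₑ := by
  simpa only [mulZ, enorm_mul] using enorm_tsum_le_tsum_enorm (f := fun l : ℕ => u (k - l) * b l)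

theorem tsum_enorm_mulZ_sq_le (u : ℤ → ℂ) (b : ℕ → ℂ) :
    ∑' k, ‖mulZ u b k‖ₑ ^ 2 ≤ (∑' l, ‖b l‖ₑ) ^ 2 * ∑' k, ‖u k‖ₑ ^ 2 :=
  (ENNReal.tsum_le_tsum fun k => pow_le_pow_left' (enorm_mulZ_le u b k) 2).trans
    (ENNReal.tsum_sq_tsum_mul_sub_le (fun k => ‖u k‖ₑ) (fun l => ‖b l‖ₑ) Nat.cast)

theorem enorm_trunc_res_le (n : ℕ∞) {κ : ℝ} (hκ : 0 ≤ κ) (f : ℕ → ℂ) (k : ℕ) :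
    ‖trunc n (res κ f) k‖ₑ ≤ ‖f k‖ₑ * ENNReal.ofReal (k + κ)⁻¹ := by
  unfold trunc res
  split_ifs
  · have hinv : ((k : ℂ) + κ)⁻¹ = (((k + κ)⁻¹ : ℝ) : ℂ) := by push_cast; rfl
    rw [div_eq_mul_inv, enorm_mul, hinv, ← ofReal_norm (((k + κ)⁻¹ : ℝ) : ℂ), Complex.norm_real,
      Real.norm_of_nonneg (by positivity)]
  · simp

theorem sum_range_inv_add_sq_le {κ : ℝ} (hκ : 1 ≤ κ) (N : ℕ) :
    ∑ k ∈ Finset.range N, ((k + κ)⁻¹) ^ 2 ≤ 2 / κ := by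
  have hpos : ∀ k : ℕ, 0 < (k : ℝ) + κ := fun k => by positivity
  -- `k + 1 + κ ≤ 2 (k + κ)` because `κ ≥ 1`
  have htele : ∀ k : ℕ, ((k + κ)⁻¹) ^ 2 ≤ 2 * ((k + κ)⁻¹ - ((k + 1 : ℕ) + κ)⁻¹) := by
    intro k
    have hk := hpos k
    rw [inv_pow, Nat.cast_succ, inv_sub_inv (by positivity) (by positivity), inv_eq_one_div,
      mul_div_assoc', div_le_div_iff₀ (by positivity) (by positivity)]
    nlinarith
  calc ∑ k ∈ Finset.range N, ((k + κ)⁻¹) ^ 2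
      ≤ 2 * ∑ k ∈ Finset.range N, ((k + κ)⁻¹ - ((k + 1 : ℕ) + κ)⁻¹) := by
        rw [Finset.mul_sum]; exact Finset.sum_le_sum fun k _ => htele k
    _ = 2 * (κ⁻¹ - (N + κ)⁻¹) := by
        rw [Finset.sum_range_sub' (fun k : ℕ => ((k : ℝ) + κ)⁻¹)]; simp
    _ ≤ 2 / κ := by
        rw [div_eq_mul_inv]; gcongr; exact sub_le_self _ (inv_pos.2 (hpos N)).le

theorem tsum_ofReal_inv_add_sq_le {κ : ℝ} (hκ : 1 ≤ κ) :
    ∑' k : ℕ, ENNReal.ofReal (k + κ)⁻¹ ^ 2 ≤ ENNReal.ofReal (2 / κ) := by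
  refine ENNReal.tsum_le_of_sum_range_le fun N => ?_
  have hpos : ∀ k : ℕ, 0 ≤ ((k : ℝ) + κ)⁻¹ := fun k => by positivity
  simp only [← ENNReal.ofReal_pow (hpos _)]
  rw [← ENNReal.ofReal_sum_of_nonneg fun k _ => by positivity]
  exact ENNReal.ofReal_le_ofReal (sum_range_inv_add_sq_le hκ N)

theorem tsum_enorm_trunc_res_sq_le (n : ℕ∞) {κ : ℝ} (hκ : 1 ≤ κ) (f : ℕ → ℂ) :
    (∑' k, ‖trunc n (res κ f) k‖ₑ) ^ 2 ≤ ENNReal.ofReal (2 / κ) * ∑' k, ‖f k‖ₑ ^ 2 :=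
  calc (∑' k, ‖trunc n (res κ f) k‖ₑ) ^ 2
      ≤ (∑' k : ℕ, ‖f k‖ₑ * ENNReal.ofReal (k + κ)⁻¹) ^ 2 := by
        gcongr with k; exact enorm_trunc_res_le n (by linarith) f k
    _ ≤ (∑' k, ‖f k‖ₑ ^ 2) * ∑' k : ℕ, ENNReal.ofReal (k + κ)⁻¹ ^ 2 :=
        ENNReal.tsum_mul_sq_le _ _
    _ ≤ ENNReal.ofReal (2 / κ) * ∑' k, ‖f k‖ₑ ^ 2 := by
        rw [mul_comm]; gcongr; exact tsum_ofReal_inv_add_sq_le hκ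

theorem stmt1_general (u : ℤ → ℂ) (hu : Summable fun k : ℤ => ‖u k‖ ^ 2)
    (n : ℕ∞) (κ : ℝ) (hκ : 1 ≤ κ)
    (f : ℕ → ℂ) (hf : Summable fun k : ℕ => ‖f k‖ ^ 2) :
    l2norm (mulZ u (trunc n (res κ f))) ≤
      Real.sqrt 3 * κ ^ (-(1 : ℝ) / 2) * l2norm u * l2norm f := by
  have hκ0 : 0 < κ := one_pos.trans_le hκ
  have hbound : ∑' k, ‖mulZ u (trunc n (res κ f)) k‖ₑ ^ 2 ≤
      ENNReal.ofReal (2 / κ) * (∑' k, ‖f k‖ₑ ^ 2) * ∑' k, ‖u k‖ₑ ^ 2 :=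
    (tsum_enorm_mulZ_sq_le _ _).trans (by gcongr; exact tsum_enorm_trunc_res_sq_le n hκ f)
  have hfin : ENNReal.ofReal (2 / κ) * (∑' k, ‖f k‖ₑ ^ 2) * ∑' k, ‖u k‖ₑ ^ 2 ≠ ∞ :=
    ENNReal.mul_ne_top (ENNReal.mul_ne_top ENNReal.ofReal_ne_top (tsum_enorm_sq_ne_top hf))
      (tsum_enorm_sq_ne_top hu)
  have hconst : Real.sqrt 3 * κ ^ (-(1 : ℝ) / 2) = √(3 / κ) := by
    rw [Real.sqrt_div' _ hκ0.le, neg_div, Real.rpow_neg hκ0.le, ← Real.sqrt_eq_rpow, div_eq_mul_inv]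
  calc l2norm (mulZ u (trunc n (res κ f)))
      ≤ √(ENNReal.ofReal (2 / κ) * (∑' k, ‖f k‖ₑ ^ 2) * ∑' k, ‖u k‖ₑ ^ 2).toReal := by
        rw [l2norm_eq_sqrt_toReal]; exact Real.sqrt_le_sqrt (ENNReal.toReal_mono hfin hbound)
    _ = √(2 / κ) * √(∑' k, ‖u k‖ₑ ^ 2).toReal * √(∑' k, ‖f k‖ₑ ^ 2).toReal := by
        rw [ENNReal.toReal_mul, ENNReal.toReal_mul, ENNReal.toReal_ofReal (by positivity),
          Real.sqrt_mul (by positivity), Real.sqrt_mul (by positivity)]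
        ring
    _ ≤ Real.sqrt 3 * κ ^ (-(1 : ℝ) / 2) * l2norm u * l2norm f := by
        rw [hconst, l2norm_eq_sqrt_toReal, l2norm_eq_sqrt_toReal]
        gcongr
        norm_num

theorem stmt1 (u : ℤ → ℂ) (hu : Summable fun k : ℤ => ‖u k‖ ^ 2)
    (n : ℕ∞) (hn : 1 ≤ n) (κ : ℝ) (hκ : 1 ≤ κ)
    (f : ℕ → ℂ) (hf : Summable fun k : ℕ => ‖f k‖ ^ 2) :
    l2norm (mulZ u (trunc n (res κ f))) ≤
      Real.sqrt 3 * κ ^ (-(1 : ℝ) / 2) * l2norm u * l2norm f :=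
  stmt1_general u hu n κ hκ f hf
end
end

section
/- For any u ∈ L²₊(T), any 1 ≤ n ≤ ∞ and any κ ≥ 1, the operator f ↦ u · Π_n(ū · Π_n R₀(κ) f) on L²₊ is bounded with operator norm at most 2‖u‖²_{L²}. -/
open scoped ComplexConjugate

noncomputable section

/-!
Write `aₖ = |û(k)|` and `cₘ = |f̂(m)|`. Truncations only shrink moduli, and `κ ≥ 1` gives
`|(R₀(κ) f)^(m)| ≤ cₘ / (m + 1)`, so the middle factor `Π_n(ū · Π_n R₀(κ) f)` has coefficients
bounded by `Hₖ = ∑ₗ aₗ c_{l+k} / (l + k + 1)`. Its `ℓ¹` norm is the bilinear form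
`∑_{l ≤ m} aₗ cₘ / (m + 1)`, which Cauchy–Schwarz and Hardy's inequality for the averages
`(a₀ + ⋯ + aₘ) / (m + 1)` bound by `2 ‖a‖₂ ‖c‖₂`. Multiplying by `u` then costs a factor `‖u‖₂`
(Young's inequality `ℓ² * ℓ¹ ⊆ ℓ²`).
-/

open Finset

lemma hardy_step (x y n : ℝ) (hn : 0 < n) :
    ((x + y) / (n + 1)) ^ 2 + (x + y) ^ 2 / (n + 1) ≤ 2 * y * ((x + y) / (n + 1)) + x ^ 2 / n := by
  have key : 2 * y * ((x + y) / (n + 1)) + x ^ 2 / n -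
      (((x + y) / (n + 1)) ^ 2 + (x + y) ^ 2 / (n + 1)) = (x - n * y) ^ 2 / (n * (n + 1) ^ 2) := by
    field_simp
    ring
  rw [← sub_nonneg, key]
  positivity

section Hardy

variable (a : ℕ → ℝ)

/-- Summation by parts for Hardy's inequality; the last term on the left is the boundary term
`N · A_{N-1}²` (and `0` at `N = 0`). -/
lemma sum_sq_avg_add_le (N : ℕ) :
    ∑ m ∈ range N, ((∑ l ∈ range (m + 1), a l) / (m + 1)) ^ 2 + (∑ l ∈ range N, a l) ^ 2 / N ≤
      2 * ∑ m ∈ range N, a m * ((∑ l ∈ range (m + 1), a l) / (m + 1)) := by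
  induction N with
  | zero => simp
  | succ N ih =>
    simp only [sum_range_succ _ N, mul_add, Nat.cast_succ]
    rcases N.eq_zero_or_pos with rfl | hN
    · simp [sq, two_mul]
    · have := hardy_step (∑ l ∈ range N, a l) (a N) N (by exact_mod_cast hN)
      nlinarith

/-- Hardy's inequality. -/
theorem sqrt_sum_sq_avg_le (N : ℕ) :
    √(∑ m ∈ range N, ((∑ l ∈ range (m + 1), a l) / (m + 1)) ^ 2) ≤
      2 * √(∑ m ∈ range N, a m ^ 2) := by
  set X := ∑ m ∈ range N, ((∑ l ∈ range (m + 1), a l) / (m + 1)) ^ 2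
  have hX : X ≤ 2 * √(∑ m ∈ range N, a m ^ 2) * √X := by
    have hbdry : 0 ≤ (∑ l ∈ range N, a l) ^ 2 / N := by positivity
    have := Real.sum_mul_le_sqrt_mul_sqrt (range N) a
      fun m => (∑ l ∈ range (m + 1), a l) / (m + 1)
    linarith [sum_sq_avg_add_le a N]
  rcases (Real.sqrt_nonneg X).eq_or_lt with h | h
  · rw [← h]; positivity
  · refine le_of_mul_le_mul_right ?_ h
    rwa [Real.mul_self_sqrt (by positivity)]

end Hardy

section HardyDual

variable {a b c : ℕ → ℝ}

lemma sum_mul_partial_sum_le (ha : ∀ l, 0 ≤ a l) (hbc : ∀ m, (m + 1) * b m ≤ c m) (M : ℕ) :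
    ∑ m ∈ range M, b m * ∑ l ∈ range (m + 1), a l ≤
      2 * √(∑ m ∈ range M, a m ^ 2) * √(∑ m ∈ range M, c m ^ 2) := by
  set A : ℕ → ℝ := fun m => (∑ l ∈ range (m + 1), a l) / (m + 1)
  calc ∑ m ∈ range M, b m * ∑ l ∈ range (m + 1), a l
      = ∑ m ∈ range M, ((m + 1) * b m) * A m := by
        refine sum_congr rfl fun m _ => ?_
        simp only [A]
        field_simp
    _ ≤ ∑ m ∈ range M, c m * A m := by
        gcongr with m
        · exact div_nonneg (sum_nonneg fun l _ => ha l) (by positivity)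
        · exact hbc m
    _ ≤ √(∑ m ∈ range M, c m ^ 2) * √(∑ m ∈ range M, A m ^ 2) :=
        Real.sum_mul_le_sqrt_mul_sqrt _ _ _
    _ ≤ √(∑ m ∈ range M, c m ^ 2) * (2 * √(∑ m ∈ range M, a m ^ 2)) := by
        gcongr
        exact sqrt_sum_sq_avg_le a M
    _ = 2 * √(∑ m ∈ range M, a m ^ 2) * √(∑ m ∈ range M, c m ^ 2) := by ring

lemma sum_sum_mul_add_le_sum_mul_partial_sum (ha : ∀ l, 0 ≤ a l) (hb : ∀ m, 0 ≤ b m)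
    (L N : ℕ) :
    ∑ l ∈ range L, ∑ k ∈ range N, a l * b (l + k) ≤
      ∑ m ∈ range (L + N), b m * ∑ l ∈ range (m + 1), a l := by
  calc ∑ l ∈ range L, ∑ k ∈ range N, a l * b (l + k)
      = ∑ l ∈ Ico 0 L, ∑ m ∈ Ico l (l + N), a l * b m := by
        rw [← range_eq_Ico]
        refine sum_congr rfl fun l _ => ?_
        rw [sum_Ico_eq_sum_range, Nat.add_sub_cancel_left]
    _ ≤ ∑ l ∈ Ico 0 (L + N), ∑ m ∈ Ico l (L + N), a l * b m := by
        refine (sum_le_sum fun l hl => sum_le_sum_of_subset_of_nonneg ?_ ?_).trans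
          (sum_le_sum_of_subset_of_nonneg (Ico_subset_Ico_right (by omega)) ?_)
        · exact Ico_subset_Ico_right (by simp at hl; omega)
        · exact fun m _ _ => mul_nonneg (ha l) (hb m)
        · exact fun l _ _ => sum_nonneg fun m _ => mul_nonneg (ha l) (hb m)
    _ = ∑ m ∈ range (L + N), b m * ∑ l ∈ range (m + 1), a l := by
        rw [sum_Ico_Ico_comm, range_eq_Ico]
        refine sum_congr rfl fun m _ => ?_
        rw [range_eq_Ico, mul_sum]
        exact sum_congr rfl fun l _ => mul_comm _ _

end HardyDual

lemma summable_mul_of_summable_sq {ι : Type*} {f g : ι → ℝ} (hf : Summable fun i => f i ^ 2)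
    (hg : Summable fun i => g i ^ 2) : Summable fun i => f i * g i :=
  ((hf.add hg).div_const 2).of_norm_bounded fun i => by
    rw [Real.norm_eq_abs, abs_mul]
    nlinarith [sq_nonneg (|f i| - |g i|), sq_abs (f i), sq_abs (g i)]

theorem sum_range_norm_mulConjH_le {u g f : ℕ → ℂ} (hu : Summable fun k => ‖u k‖ ^ 2)
    (hf : Summable fun k => ‖f k‖ ^ 2) (hgf : ∀ m : ℕ, ((m : ℝ) + 1) * ‖g m‖ ≤ ‖f m‖) (N : ℕ) :
    ∑ k ∈ range N, ‖mulConjH u g k‖ ≤ 2 * l2norm u * l2norm f := by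
  have hg_le (m : ℕ) : ‖g m‖ ≤ ‖f m‖ :=
    (le_mul_of_one_le_left (norm_nonneg _) (by linarith [m.cast_nonneg (α := ℝ)])).trans (hgf m)
  have hsum (k : ℕ) : Summable fun l => ‖u l‖ * ‖g (l + k)‖ :=
    (summable_mul_of_summable_sq hu ((summable_nat_add_iff k).2 hf)).of_nonneg_of_le
      (fun l => by positivity) fun l => mul_le_mul_of_nonneg_left (hg_le _) (norm_nonneg _)
  calc ∑ k ∈ range N, ‖mulConjH u g k‖
      ≤ ∑ k ∈ range N, ∑' l, ‖u l‖ * ‖g (l + k)‖ := by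
        refine sum_le_sum fun k _ => ?_
        simpa only [mulConjH, norm_mul, Complex.norm_conj] using
          norm_tsum_le_tsum_norm (f := fun l => conj (u l) * g (l + k))
            (by simpa only [norm_mul, Complex.norm_conj] using hsum k)
    _ = ∑' l, ∑ k ∈ range N, ‖u l‖ * ‖g (l + k)‖ :=
        (Summable.tsum_finsetSum fun k _ => hsum k).symm
    _ ≤ 2 * l2norm u * l2norm f := by
        refine Real.tsum_le_of_sum_range_le (fun l => by positivity) fun L => ?_
        calc ∑ l ∈ range L, ∑ k ∈ range N, ‖u l‖ * ‖g (l + k)‖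
            ≤ ∑ m ∈ range (L + N), ‖g m‖ * ∑ l ∈ range (m + 1), ‖u l‖ :=
              sum_sum_mul_add_le_sum_mul_partial_sum (fun _ => norm_nonneg _)
                (fun _ => norm_nonneg _) L N
          _ ≤ 2 * √(∑ m ∈ range (L + N), ‖u m‖ ^ 2) * √(∑ m ∈ range (L + N), ‖f m‖ ^ 2) :=
              sum_mul_partial_sum_le (fun _ => norm_nonneg _) hgf (L + N)
          _ ≤ 2 * l2norm u * l2norm f := by
              unfold l2norm
              gcongr
              · exact hu.sum_le_tsum _ fun _ _ => by positivity
              · exact hf.sum_le_tsum _ fun _ _ => by positivity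

/-- Young's inequality `‖x * y‖₂ ≤ ‖y‖₁ ‖x‖₂`, on the window `[0, N)`. -/
lemma sum_range_sq_conv_le (x y : ℕ → ℝ) (hy : ∀ k, 0 ≤ y k) (N : ℕ) :
    ∑ j ∈ range N, (∑ k ∈ range (j + 1), x (j - k) * y k) ^ 2 ≤
      (∑ k ∈ range N, y k) ^ 2 * ∑ j ∈ range N, x j ^ 2 := by
  have hpoint : ∀ j ∈ range N, (∑ k ∈ range (j + 1), x (j - k) * y k) ^ 2 ≤
      (∑ k ∈ range N, y k) * ∑ k ∈ range (j + 1), y k * x (j - k) ^ 2 := by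
    intro j hj
    refine (sum_sq_le_sum_mul_sum_of_sq_le_mul _ (fun k _ => hy k)
      (fun k _ => mul_nonneg (hy k) (sq_nonneg _)) fun k _ => le_of_eq (by ring)).trans ?_
    gcongr
    · exact sum_nonneg fun k _ => mul_nonneg (hy k) (sq_nonneg _)
    · exact fun k _ _ => hy k
    · exact Nat.succ_le_of_lt (mem_range.1 hj)
  calc ∑ j ∈ range N, (∑ k ∈ range (j + 1), x (j - k) * y k) ^ 2
      ≤ ∑ j ∈ range N, (∑ k ∈ range N, y k) * ∑ k ∈ range (j + 1), y k * x (j - k) ^ 2 :=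
        sum_le_sum hpoint
    _ = (∑ k ∈ range N, y k) * ∑ k ∈ range N, y k * ∑ j ∈ Ico k N, x (j - k) ^ 2 := by
        rw [← mul_sum]
        congr 1
        simp only [mul_sum, range_eq_Ico]
        exact (sum_Ico_Ico_comm 0 N fun k j => y k * x (j - k) ^ 2).symm
    _ ≤ (∑ k ∈ range N, y k) * ∑ k ∈ range N, y k * ∑ j ∈ range N, x j ^ 2 := by
        gcongr with k hk
        · exact sum_nonneg fun k _ => hy k
        · exact hy k
        · rw [sum_Ico_eq_sum_range]
          simp only [Nat.add_sub_cancel_left]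
          exact sum_le_sum_of_subset_of_nonneg (range_subset_range.2 (Nat.sub_le N k))
            fun _ _ _ => sq_nonneg _
    _ = (∑ k ∈ range N, y k) ^ 2 * ∑ j ∈ range N, x j ^ 2 := by rw [← sum_mul]; ring

theorem l2norm_mulH_le {u b : ℕ → ℂ} {C : ℝ} (hu : Summable fun k => ‖u k‖ ^ 2)
    (hb : ∀ N, ∑ k ∈ range N, ‖b k‖ ≤ C) : l2norm (mulH u b) ≤ C * l2norm u := by
  have hC : 0 ≤ C := by simpa using hb 0
  have hpartial (N : ℕ) : ∑ j ∈ range N, ‖mulH u b j‖ ^ 2 ≤ (C * l2norm u) ^ 2 :=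
    calc ∑ j ∈ range N, ‖mulH u b j‖ ^ 2
        ≤ ∑ j ∈ range N, (∑ k ∈ range (j + 1), ‖u (j - k)‖ * ‖b k‖) ^ 2 := by
          refine sum_le_sum fun j _ => pow_le_pow_left₀ (norm_nonneg _) ?_ 2
          simpa only [mulH, norm_mul] using norm_sum_le (range (j + 1)) fun k => u (j - k) * b k
      _ ≤ (∑ k ∈ range N, ‖b k‖) ^ 2 * ∑ j ∈ range N, ‖u j‖ ^ 2 :=
          sum_range_sq_conv_le (fun i => ‖u i‖) (fun k => ‖b k‖) (fun k => norm_nonneg _) N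
      _ ≤ C ^ 2 * ∑' j, ‖u j‖ ^ 2 := by
          gcongr
          · exact hb N
          · exact hu.sum_le_tsum _ fun _ _ => by positivity
      _ = (C * l2norm u) ^ 2 := by
          rw [mul_pow, l2norm, Real.sq_sqrt (tsum_nonneg fun _ => by positivity)]
  calc l2norm (mulH u b) ≤ √((C * l2norm u) ^ 2) := by
        rw [l2norm]
        exact Real.sqrt_le_sqrt (Real.tsum_le_of_sum_range_le (fun _ => by positivity) hpartial)
    _ = C * l2norm u := Real.sqrt_sq (mul_nonneg hC (Real.sqrt_nonneg _))

lemma norm_trunc_le (n : ℕ∞) (a : ℕ → ℂ) (k : ℕ) : ‖trunc n a k‖ ≤ ‖a k‖ := by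
  unfold trunc
  split_ifs <;> simp

lemma succ_mul_norm_res_le {κ : ℝ} (hκ : 1 ≤ κ) (f : ℕ → ℂ) (m : ℕ) :
    ((m : ℝ) + 1) * ‖res κ f m‖ ≤ ‖f m‖ := by
  have hden : ‖(m : ℂ) + κ‖ = m + κ := by
    rw [← Complex.ofReal_natCast, ← Complex.ofReal_add, Complex.norm_of_nonneg (by positivity)]
  rw [res, norm_div, hden, ← mul_div_assoc, mul_comm, mul_div_assoc]
  exact mul_le_of_le_one_right (norm_nonneg _) ((div_le_one (by positivity)).2 (by linarith))

theorem stmt2_general (u : ℕ → ℂ) (hu : Summable fun k : ℕ => ‖u k‖ ^ 2)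
    (n : ℕ∞) (κ : ℝ) (hκ : 1 ≤ κ)
    (f : ℕ → ℂ) (hf : Summable fun k : ℕ => ‖f k‖ ^ 2) :
    l2norm (mulH u (trunc n (mulConjH u (trunc n (res κ f))))) ≤
      2 * l2norm u ^ 2 * l2norm f := by
  have hresolvent (m : ℕ) : ((m : ℝ) + 1) * ‖trunc n (res κ f) m‖ ≤ ‖f m‖ :=
    (mul_le_mul_of_nonneg_left (norm_trunc_le n _ m) (by positivity)).trans
      (succ_mul_norm_res_le hκ f m)
  have hmiddle (N : ℕ) :
      ∑ k ∈ range N, ‖trunc n (mulConjH u (trunc n (res κ f))) k‖ ≤ 2 * l2norm u * l2norm f :=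
    (sum_le_sum fun k _ => norm_trunc_le n _ k).trans
      (sum_range_norm_mulConjH_le hu hf hresolvent N)
  calc _ ≤ 2 * l2norm u * l2norm f * l2norm u := l2norm_mulH_le hu hmiddle
    _ = 2 * l2norm u ^ 2 * l2norm f := by ring

theorem stmt2 (u : ℕ → ℂ) (hu : Summable fun k : ℕ => ‖u k‖ ^ 2)
    (n : ℕ∞) (hn : 1 ≤ n) (κ : ℝ) (hκ : 1 ≤ κ)
    (f : ℕ → ℂ) (hf : Summable fun k : ℕ => ‖f k‖ ^ 2) :
    l2norm (mulH u (trunc n (mulConjH u (trunc n (res κ f))))) ≤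
      2 * l2norm u ^ 2 * l2norm f :=
  stmt2_general u hu n κ hκ f hf
end
end

section
/- If a is a sequence of nonnegative reals in ℓ²(N) and κ ≥ 1, then the sequence b(l) = (1/(l+κ)) Σ_{m=0}^{l} a(m) satisfies ‖b‖_{ℓ²} ≤ 2‖a‖_{ℓ²}. -/
/-!
Write `b l = (a 0 + ⋯ + a l) / (l + 1)`. From `(l + 2) b (l+1) = (l + 1) b l + a (l+1)` one gets
the telescoping identity `(n+2) b(n+1)² + (n+1) (b n - b(n+1))² = (n+1) b n² + 2 a(n+1) b(n+1) - b(n+1)²`,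
hence `∑_{l<N} b l² ≤ 2 ∑_{l<N} a l b l`, and Cauchy–Schwarz turns this into
`∑_{l<N} b l² ≤ 4 ∑_{l<N} a l²`. A larger shift `κ ≥ 1` only shrinks the terms.
-/

open Finset

noncomputable def hardyMean (a : ℕ → ℝ) (l : ℕ) : ℝ :=
  (∑ m ∈ range (l + 1), a m) / ((l : ℝ) + 1)

lemma add_one_mul_hardyMean (a : ℕ → ℝ) (l : ℕ) :
    ((l : ℝ) + 1) * hardyMean a l = ∑ m ∈ range (l + 1), a m := by
  rw [hardyMean, mul_div_cancel₀ _ (by positivity)]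

lemma hardyMean_succ (a : ℕ → ℝ) (n : ℕ) :
    ((n : ℝ) + 2) * hardyMean a (n + 1) = ((n : ℝ) + 1) * hardyMean a n + a (n + 1) := by
  have h := add_one_mul_hardyMean a (n + 1)
  rw [sum_range_succ, ← add_one_mul_hardyMean] at h
  push_cast at h
  linarith

lemma add_one_mul_sq_hardyMean_le (a : ℕ → ℝ) (N : ℕ) :
    ((N : ℝ) + 1) * hardyMean a N ^ 2 ≤
      ∑ l ∈ range (N + 1), (2 * a l * hardyMean a l - hardyMean a l ^ 2) := by
  induction N with
  | zero =>
    refine le_of_eq ?_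
    simp [hardyMean]
    ring
  | succ n ih =>
    have htelescope : ((n : ℝ) + 2) * hardyMean a (n + 1) ^ 2
        + ((n : ℝ) + 1) * (hardyMean a n - hardyMean a (n + 1)) ^ 2
        = ((n : ℝ) + 1) * hardyMean a n ^ 2
          + (2 * a (n + 1) * hardyMean a (n + 1) - hardyMean a (n + 1) ^ 2) := by
      linear_combination (2 * hardyMean a (n + 1)) * hardyMean_succ a n
    have hsq : 0 ≤ ((n : ℝ) + 1) * (hardyMean a n - hardyMean a (n + 1)) ^ 2 := by positivity
    rw [sum_range_succ]
    push_cast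
    linarith

lemma sum_sq_hardyMean_le_two_mul_sum_mul (a : ℕ → ℝ) (N : ℕ) :
    ∑ l ∈ range N, hardyMean a l ^ 2 ≤ 2 * ∑ l ∈ range N, a l * hardyMean a l := by
  cases N with
  | zero => simp
  | succ n =>
    have h := add_one_mul_sq_hardyMean_le a n
    have hsplit : ∑ l ∈ range (n + 1), (2 * a l * hardyMean a l - hardyMean a l ^ 2)
        = 2 * ∑ l ∈ range (n + 1), a l * hardyMean a l - ∑ l ∈ range (n + 1), hardyMean a l ^ 2 := by
      rw [sum_sub_distrib, mul_sum]
      simp only [mul_assoc]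
    have hnn : 0 ≤ ((n : ℝ) + 1) * hardyMean a n ^ 2 := by positivity
    linarith

lemma sum_sq_hardyMean_le (a : ℕ → ℝ) (N : ℕ) :
    ∑ l ∈ range N, hardyMean a l ^ 2 ≤ 4 * ∑ l ∈ range N, a l ^ 2 := by
  set B := ∑ l ∈ range N, hardyMean a l ^ 2
  set S := ∑ l ∈ range N, a l ^ 2
  set P := ∑ l ∈ range N, a l * hardyMean a l
  have hBP : B ≤ 2 * P := sum_sq_hardyMean_le_two_mul_sum_mul a N
  have hcs : P ^ 2 ≤ S * B := sum_mul_sq_le_sq_mul_sq (range N) a (hardyMean a)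
  have hB : 0 ≤ B := sum_nonneg fun _ _ => sq_nonneg _
  have hS : 0 ≤ S := sum_nonneg fun _ _ => sq_nonneg _
  nlinarith

lemma sum_sq_hardyMean_le_tsum {a : ℕ → ℝ} (ha : Summable fun m => a m ^ 2) (N : ℕ) :
    ∑ l ∈ range N, hardyMean a l ^ 2 ≤ 4 * ∑' m, a m ^ 2 :=
  (sum_sq_hardyMean_le a N).trans <|
    mul_le_mul_of_nonneg_left (ha.sum_le_tsum _ fun _ _ => sq_nonneg _) (by norm_num)

lemma summable_sq_hardyMean {a : ℕ → ℝ} (ha : Summable fun m => a m ^ 2) :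
    Summable fun l => hardyMean a l ^ 2 :=
  summable_of_sum_range_le (fun _ => sq_nonneg _) (sum_sq_hardyMean_le_tsum ha)

lemma tsum_sq_hardyMean_le {a : ℕ → ℝ} (ha : Summable fun m => a m ^ 2) :
    ∑' l, hardyMean a l ^ 2 ≤ 4 * ∑' m, a m ^ 2 :=
  Real.tsum_le_of_sum_range_le (fun _ => sq_nonneg _) (sum_sq_hardyMean_le_tsum ha)

lemma sq_sum_range_div_le_sq_hardyMean (a : ℕ → ℝ) {κ : ℝ} (hκ : 1 ≤ κ) (l : ℕ) :
    ((∑ m ∈ range (l + 1), a m) / ((l : ℝ) + κ)) ^ 2 ≤ hardyMean a l ^ 2 := by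
  rw [hardyMean, div_pow, div_pow]
  gcongr

theorem stmt4_general (a : ℕ → ℝ) (ha2 : Summable fun m => a m ^ 2)
    (κ : ℝ) (hκ : 1 ≤ κ) :
    Summable (fun l : ℕ => (((Finset.range (l + 1)).sum a) / ((l : ℝ) + κ)) ^ 2) ∧
      Real.sqrt (∑' l : ℕ, (((Finset.range (l + 1)).sum a) / ((l : ℝ) + κ)) ^ 2) ≤
        2 * Real.sqrt (∑' m : ℕ, a m ^ 2) := by
  have hle := sq_sum_range_div_le_sq_hardyMean a hκ
  have hsum := (summable_sq_hardyMean ha2).of_nonneg_of_le (fun _ => sq_nonneg _) hle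
  refine ⟨hsum, ?_⟩
  calc Real.sqrt (∑' l : ℕ, ((∑ m ∈ range (l + 1), a m) / ((l : ℝ) + κ)) ^ 2)
      ≤ Real.sqrt (2 ^ 2 * ∑' m, a m ^ 2) := by
        gcongr
        exact (hsum.tsum_le_tsum hle (summable_sq_hardyMean ha2)).trans
          ((tsum_sq_hardyMean_le ha2).trans_eq (by norm_num))
    _ = 2 * Real.sqrt (∑' m, a m ^ 2) := by
        rw [Real.sqrt_mul (by positivity), Real.sqrt_sq zero_le_two]

theorem stmt4 (a : ℕ → ℝ) (ha : ∀ m, 0 ≤ a m) (ha2 : Summable fun m => a m ^ 2)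
    (κ : ℝ) (hκ : 1 ≤ κ) :
    Summable (fun l : ℕ => (((Finset.range (l + 1)).sum a) / ((l : ℝ) + κ)) ^ 2) ∧
      Real.sqrt (∑' l : ℕ, (((Finset.range (l + 1)).sum a) / ((l : ℝ) + κ)) ^ 2) ≤
        2 * Real.sqrt (∑' m : ℕ, a m ^ 2) :=
  stmt4_general a ha2 κ hκ
end

section
/- Let u ∈ L²(T) be real-valued and 1 ≤ n ≤ ∞. There is κ₀ = κ₀(‖u‖_{L²}) ≥ 1 (one may take κ₀ = max{12‖u‖²_{L²}, 1}) such that for all κ ≥ κ₀ and all f ∈ H¹₊: (1/2)‖f‖_{H¹_κ} ≤ ‖(L_n + κ)f‖_{L²} ≤ (3/2)‖f‖_{H¹_κ}, where L_n = -i∂_x - Π_n(u Π_n ·). -/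
open scoped ComplexConjugate

noncomputable section

/-- The truncated Toeplitz part `Π_n(u · Π_n f)` of the (BO) Lax operator, on the Fourier side. -/
def toepBO (u : ℤ → ℂ) (n : ℕ∞) (f : ℕ → ℂ) : ℕ → ℂ :=
  trunc n fun k => mulZ u (trunc n f) (k : ℤ)

/-- `(L_n + κ)f` for the truncated (BO) Lax operator `L_n = -i∂ₓ - Π_n u Π_n`,
on the Fourier side (the Fourier multiplier of `-i∂ₓ` on the Hardy space is `k`). -/
def LplusBO (u : ℤ → ℂ) (n : ℕ∞) (κ : ℝ) (f : ℕ → ℂ) : ℕ → ℂ :=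
  fun k => ((k : ℂ) + κ) * f k - toepBO u n f k

/-- The weighted Sobolev norm `‖f‖_{H^s_κ}`, `‖f‖²_{H^s_κ} = ∑ₖ (|k|+κ)^{2s}|f̂(k)|²`,
for a Hardy-space function (where `|k| = k`). -/
def hnorm (s κ : ℝ) (f : ℕ → ℂ) : ℝ :=
  Real.sqrt (∑' k : ℕ, ((k : ℝ) + κ) ^ (2 * s) * ‖f k‖ ^ 2)

/-- Membership in `H¹₊ = H¹ ∩ L²₊`, on the Fourier side. -/
def memH1 (f : ℕ → ℂ) : Prop := Summable fun k : ℕ => ((k : ℝ) + 1) ^ 2 * ‖f k‖ ^ 2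


/-- product of two square-summable nonneg sequences is summable -/
lemma aux_mul_summable (a b : ℕ → ℝ) (ha0 : ∀ k, 0 ≤ a k) (hb0 : ∀ k, 0 ≤ b k)
    (ha : Summable fun k => a k ^ 2) (hb : Summable fun k => b k ^ 2) :
    Summable fun k => a k * b k := by
  refine Summable.of_nonneg_of_le (fun k => mul_nonneg (ha0 k) (hb0 k)) (fun k => ?_)
    ((ha.add hb).div_const 2)
  nlinarith [sq_nonneg (a k - b k)]

/-- Cauchy-Schwarz for tsums over ℕ -/
lemma aux_tsum_cs (a b : ℕ → ℝ) (ha0 : ∀ k, 0 ≤ a k) (hb0 : ∀ k, 0 ≤ b k)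
    (ha : Summable fun k => a k ^ 2) (hb : Summable fun k => b k ^ 2) :
    (∑' k, a k * b k) ≤ Real.sqrt (∑' k, a k ^ 2) * Real.sqrt (∑' k, b k ^ 2) := by
  refine Summable.tsum_le_of_sum_le (aux_mul_summable a b ha0 hb0 ha hb) (fun s => ?_)
  have h1 : (∑ i ∈ s, a i * b i) ^ 2 ≤ (∑ i ∈ s, a i ^ 2) * (∑ i ∈ s, b i ^ 2) :=
    Finset.sum_mul_sq_le_sq_mul_sq s a b
  have h2 : (∑ i ∈ s, a i ^ 2) ≤ ∑' k, a k ^ 2 :=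
    Summable.sum_le_tsum s (fun i _ => sq_nonneg _) ha
  have h3 : (∑ i ∈ s, b i ^ 2) ≤ ∑' k, b k ^ 2 :=
    Summable.sum_le_tsum s (fun i _ => sq_nonneg _) hb
  have h4 : (0:ℝ) ≤ ∑ i ∈ s, a i * b i :=
    Finset.sum_nonneg fun i _ => mul_nonneg (ha0 i) (hb0 i)
  have h5 : (0:ℝ) ≤ ∑ i ∈ s, a i ^ 2 := Finset.sum_nonneg fun i _ => sq_nonneg _
  have h6 : (0:ℝ) ≤ ∑ i ∈ s, b i ^ 2 := Finset.sum_nonneg fun i _ => sq_nonneg _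
  calc ∑ i ∈ s, a i * b i = Real.sqrt ((∑ i ∈ s, a i * b i) ^ 2) := (Real.sqrt_sq h4).symm
    _ ≤ Real.sqrt ((∑' k, a k ^ 2) * (∑' k, b k ^ 2)) :=
        Real.sqrt_le_sqrt (h1.trans (mul_le_mul h2 h3 h6 (le_trans h5 h2)))
    _ = _ := Real.sqrt_mul (le_trans h5 h2) _

/-- summability of `‖a+b‖²` -/
lemma aux_add_summable (a b : ℕ → ℂ) (ha : Summable fun k => ‖a k‖ ^ 2)
    (hb : Summable fun k => ‖b k‖ ^ 2) : Summable fun k => ‖a k + b k‖ ^ 2 := by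
  refine Summable.of_nonneg_of_le (fun k => sq_nonneg _) (fun k => ?_)
    ((ha.mul_left 2).add (hb.mul_left 2))
  have h := norm_add_le (a k) (b k)
  have h2 : ‖a k + b k‖ ^ 2 ≤ (‖a k‖ + ‖b k‖) ^ 2 := pow_le_pow_left₀ (norm_nonneg _) h 2
  nlinarith [sq_nonneg (‖a k‖ - ‖b k‖)]

/-- ℓ² triangle inequality -/
lemma aux_l2_tri (a b : ℕ → ℂ) (ha : Summable fun k => ‖a k‖ ^ 2)
    (hb : Summable fun k => ‖b k‖ ^ 2) :
    l2norm (fun k => a k + b k) ≤ l2norm a + l2norm b := by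
  have hab : Summable fun k => ‖a k‖ * ‖b k‖ :=
    aux_mul_summable _ _ (fun k => norm_nonneg _) (fun k => norm_nonneg _) ha hb
  have hcs := aux_tsum_cs (fun k => ‖a k‖) (fun k => ‖b k‖)
    (fun k => norm_nonneg _) (fun k => norm_nonneg _) ha hb
  have h1 : (∑' k, ‖a k + b k‖ ^ 2) ≤
      ∑' k, (‖a k‖ ^ 2 + 2 * (‖a k‖ * ‖b k‖) + ‖b k‖ ^ 2) := by
    refine Summable.tsum_le_tsum (fun k => ?_) (aux_add_summable a b ha hb)
      ((ha.add (hab.mul_left 2)).add hb)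
    have h := norm_add_le (a k) (b k)
    have h2 : ‖a k + b k‖ ^ 2 ≤ (‖a k‖ + ‖b k‖) ^ 2 := pow_le_pow_left₀ (norm_nonneg _) h 2
    nlinarith []
  have h2 : (∑' k, (‖a k‖ ^ 2 + 2 * (‖a k‖ * ‖b k‖) + ‖b k‖ ^ 2))
      = (∑' k, ‖a k‖ ^ 2) + 2 * (∑' k, ‖a k‖ * ‖b k‖) + (∑' k, ‖b k‖ ^ 2) := by
    rw [Summable.tsum_add (ha.add (hab.mul_left 2)) hb, Summable.tsum_add ha (hab.mul_left 2), tsum_mul_left]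
  have ha0 : (0:ℝ) ≤ ∑' k, ‖a k‖ ^ 2 := tsum_nonneg fun k => sq_nonneg _
  have hb0 : (0:ℝ) ≤ ∑' k, ‖b k‖ ^ 2 := tsum_nonneg fun k => sq_nonneg _
  have hsa := Real.sq_sqrt ha0
  have hsb := Real.sq_sqrt hb0
  unfold l2norm
  rw [show Real.sqrt (∑' k, ‖a k‖ ^ 2) + Real.sqrt (∑' k, ‖b k‖ ^ 2)
      = Real.sqrt ((Real.sqrt (∑' k, ‖a k‖ ^ 2) + Real.sqrt (∑' k, ‖b k‖ ^ 2)) ^ 2) from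
      (Real.sqrt_sq (add_nonneg (Real.sqrt_nonneg _) (Real.sqrt_nonneg _))).symm]
  refine Real.sqrt_le_sqrt ?_
  nlinarith [h1, h2, hcs, Real.sqrt_nonneg (∑' k, ‖a k‖ ^ 2), Real.sqrt_nonneg (∑' k, ‖b k‖ ^ 2)]

/-- the resolvent-weight sum bound : `∑ 1/(l+κ)² ≤ 2/κ` -/
lemma aux_S (κ : ℝ) (hκ1 : 1 ≤ κ) :
    Summable (fun l : ℕ => (((l : ℝ) + κ) ^ 2)⁻¹) ∧
      (∑' l : ℕ, (((l : ℝ) + κ) ^ 2)⁻¹) ≤ 2 / κ := by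
  have hpos : ∀ l : ℕ, (0:ℝ) < (l : ℝ) + κ := fun l => by
    have := Nat.cast_nonneg (α := ℝ) l; linarith
  set t : ℕ → ℝ := fun l => ((l : ℝ) + κ)⁻¹ - (((l : ℝ) + 1) + κ)⁻¹ with ht
  have ht0 : ∀ l, 0 ≤ t l := by
    intro l
    have h1 : (0:ℝ) < (l : ℝ) + κ := hpos l
    have : (((l : ℝ) + 1) + κ)⁻¹ ≤ ((l : ℝ) + κ)⁻¹ := by
      apply inv_anti₀ h1; linarith
    simpa [ht] using sub_nonneg.2 this
  have htend : Filter.Tendsto (fun n : ℕ => ((n : ℝ) + κ)⁻¹) Filter.atTop (nhds 0) := by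
    apply Filter.Tendsto.inv_tendsto_atTop
    exact Filter.tendsto_atTop_add_const_right _ κ tendsto_natCast_atTop_atTop
  have htsum : HasSum t κ⁻¹ := by
    rw [hasSum_iff_tendsto_nat_of_nonneg ht0]
    have heq : ∀ n : ℕ, ∑ i ∈ Finset.range n, t i = κ⁻¹ - ((n : ℝ) + κ)⁻¹ := by
      intro n
      have h := Finset.sum_range_sub' (f := fun i : ℕ => ((i : ℝ) + κ)⁻¹) n
      have : ∀ i : ℕ, t i = ((i : ℝ) + κ)⁻¹ - (((i + 1 : ℕ) : ℝ) + κ)⁻¹ := by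
        intro i; push_cast; rfl
      rw [Finset.sum_congr rfl (fun i _ => this i), h]
      simp
    simp_rw [heq]
    simpa using Filter.Tendsto.const_sub κ⁻¹ htend
  have hle : ∀ l : ℕ, (((l : ℝ) + κ) ^ 2)⁻¹ ≤ 2 * t l := by
    intro l
    have hx : (0:ℝ) < (l : ℝ) + κ := hpos l
    have hx1 : (1:ℝ) ≤ (l : ℝ) + κ := by
      have := Nat.cast_nonneg (α := ℝ) l; linarith
    have hy : (0:ℝ) < ((l : ℝ) + 1) + κ := by linarith
    have e : t l = (((l : ℝ) + κ) * (((l : ℝ) + 1) + κ))⁻¹ := by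
      simp only [ht]
      rw [inv_sub_inv (ne_of_gt hx) (ne_of_gt hy),
        show ((l : ℝ) + 1) + κ - ((l : ℝ) + κ) = 1 by ring, one_div]
    have h1 : (2 * ((l : ℝ) + κ) ^ 2)⁻¹ ≤ ((((l : ℝ) + κ) * (((l : ℝ) + 1) + κ)))⁻¹ :=
      inv_anti₀ (by positivity) (by nlinarith)
    calc (((l : ℝ) + κ) ^ 2)⁻¹ = 2 * (2 * ((l : ℝ) + κ) ^ 2)⁻¹ := by
          field_simp
      _ ≤ 2 * t l := by rw [e]; linarith
  have hsum2 : Summable (fun l => 2 * t l) := htsum.summable.mul_left 2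
  have hsum1 : Summable (fun l : ℕ => (((l : ℝ) + κ) ^ 2)⁻¹) :=
    Summable.of_nonneg_of_le (fun l => inv_nonneg.2 (sq_nonneg _)) hle hsum2
  refine ⟨hsum1, ?_⟩
  calc (∑' l : ℕ, (((l : ℝ) + κ) ^ 2)⁻¹) ≤ ∑' l, 2 * t l := Summable.tsum_le_tsum hle hsum1 hsum2
    _ = 2 * κ⁻¹ := by rw [tsum_mul_left, htsum.tsum_eq]
    _ = 2 / κ := by rw [div_eq_mul_inv]

lemma aux_key (u : ℤ → ℂ) (hu : Summable fun k : ℤ => ‖u k‖ ^ 2) (κ : ℝ) (hκ1 : 1 ≤ κ)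
    (hκ : 12 * (∑' m : ℤ, ‖u m‖ ^ 2) ≤ κ) (n : ℕ∞) (f : ℕ → ℂ)
    (hf2 : Summable fun l : ℕ => ((l : ℝ) + κ) ^ 2 * ‖f l‖ ^ 2) :
    Summable (fun k => ‖toepBO u n f k‖ ^ 2) ∧
      (∑' k, ‖toepBO u n f k‖ ^ 2) ≤
        (1 / 4) * ∑' l : ℕ, ((l : ℝ) + κ) ^ 2 * ‖f l‖ ^ 2 := by
  have hκ0 : (0:ℝ) < κ := lt_of_lt_of_le one_pos hκ1
  have hpos : ∀ l : ℕ, (0:ℝ) < (l : ℝ) + κ := fun l => by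
    have := Nat.cast_nonneg (α := ℝ) l; linarith
  set U := ∑' m : ℤ, ‖u m‖ ^ 2 with hUdef
  have hU0 : 0 ≤ U := tsum_nonneg fun _ => sq_nonneg _
  set H := ∑' l : ℕ, ((l : ℝ) + κ) ^ 2 * ‖f l‖ ^ 2 with hHdef
  have hH0 : 0 ≤ H := tsum_nonneg fun l => by positivity
  set g := trunc n f with hgdef
  have hgle : ∀ l, ‖g l‖ ≤ ‖f l‖ := by
    intro l; simp only [hgdef, trunc]; split <;> simp
  have hgsq : Summable fun l : ℕ => ((l : ℝ) + κ) ^ 2 * ‖g l‖ ^ 2 := by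
    refine Summable.of_nonneg_of_le (fun l => by positivity) (fun l => ?_) hf2
    exact mul_le_mul_of_nonneg_left (pow_le_pow_left₀ (norm_nonneg _) (hgle l) 2)
      (by positivity)
  have hgs : Summable fun l : ℕ => ‖g l‖ ^ 2 := by
    refine Summable.of_nonneg_of_le (fun l => sq_nonneg _) (fun l => ?_) hgsq
    have h1 : (1:ℝ) ≤ ((l : ℝ) + κ) ^ 2 := by nlinarith [hpos l, Nat.cast_nonneg (α := ℝ) l]
    nlinarith [sq_nonneg ‖g l‖]
  have hUb : ∀ m : ℤ, ‖u m‖ ^ 2 ≤ U := fun m => Summable.le_tsum hu m fun _ _ => sq_nonneg _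
  have hul : ∀ k : ℕ, Summable fun l : ℕ => ‖u ((k : ℤ) - l)‖ ^ 2 := fun k =>
    hu.comp_injective (fun a b h => by omega)
  -- the dominating kernel
  have hcs : ∀ k : ℕ, Summable fun l : ℕ =>
      ‖u ((k : ℤ) - l)‖ ^ 2 * (((l : ℝ) + κ) ^ 2 * ‖g l‖ ^ 2) := by
    intro k
    refine Summable.of_nonneg_of_le (fun l => by positivity) (fun l => ?_) (hgsq.mul_left U)
    exact mul_le_mul_of_nonneg_right (hUb _) (by positivity)
  set M : ℕ → ℝ := fun k => ∑' l : ℕ, ‖u ((k : ℤ) - l)‖ * ‖g l‖ with hMdef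
  have hM0 : ∀ k, 0 ≤ M k := fun k => tsum_nonneg fun l => by positivity
  have hMsum : ∀ k : ℕ, Summable fun l : ℕ => ‖u ((k : ℤ) - l)‖ * ‖g l‖ := fun k =>
    aux_mul_summable _ _ (fun _ => norm_nonneg _) (fun _ => norm_nonneg _) (hul k) hgs
  -- pointwise bound on the Toeplitz part
  have hT : ∀ k : ℕ, ‖toepBO u n f k‖ ≤ M k := by
    intro k
    have he : toepBO u n f k = if (k : ℕ∞) < n then mulZ u g (k : ℤ) else 0 := by
      simp only [toepBO]
      rw [← hgdef]
      simp only [trunc]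
    rw [he]
    split
    · calc ‖mulZ u g (k : ℤ)‖ ≤ ∑' l : ℕ, ‖u ((k : ℤ) - l) * g l‖ := by
            refine norm_tsum_le_tsum_norm ?_
            exact (hMsum k).congr fun l => (norm_mul _ _).symm
        _ = M k := by simp only [hMdef, norm_mul]
    · simpa using hM0 k
  -- Cauchy-Schwarz pointwise in k
  set S := ∑' l : ℕ, (((l : ℝ) + κ) ^ 2)⁻¹ with hSdef
  have hS0 : 0 ≤ S := tsum_nonneg fun l => by positivity
  have hS2 : S ≤ 2 / κ := (aux_S κ hκ1).2
  have hQ : ∀ k : ℕ, M k ^ 2 ≤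
      (∑' l : ℕ, ‖u ((k : ℤ) - l)‖ ^ 2 * (((l : ℝ) + κ) ^ 2 * ‖g l‖ ^ 2)) * S := by
    intro k
    have ha2 : (fun l : ℕ => (‖u ((k : ℤ) - l)‖ * (((l : ℝ) + κ) * ‖g l‖)) ^ 2)
        = fun l : ℕ => ‖u ((k : ℤ) - l)‖ ^ 2 * (((l : ℝ) + κ) ^ 2 * ‖g l‖ ^ 2) := by
      funext l; ring
    have hb2 : (fun l : ℕ => (((l : ℝ) + κ)⁻¹) ^ 2)
        = fun l : ℕ => (((l : ℝ) + κ) ^ 2)⁻¹ := by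
      funext l; rw [← inv_pow]
    have hcs2 := aux_tsum_cs (fun l => ‖u ((k : ℤ) - l)‖ * (((l : ℝ) + κ) * ‖g l‖))
      (fun l => ((l : ℝ) + κ)⁻¹)
      (fun l => by positivity) (fun l => by positivity)
      (by rw [ha2]; exact hcs k) (by rw [hb2]; exact (aux_S κ hκ1).1)
    have hab : ∀ l : ℕ, (‖u ((k : ℤ) - l)‖ * (((l : ℝ) + κ) * ‖g l‖)) * ((l : ℝ) + κ)⁻¹
        = ‖u ((k : ℤ) - l)‖ * ‖g l‖ := by
      intro l; field_simp
    rw [tsum_congr hab] at hcs2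
    rw [ha2, hb2] at hcs2
    have hM : M k = ∑' l : ℕ, ‖u ((k : ℤ) - l)‖ * ‖g l‖ := rfl
    have h5 : (0:ℝ) ≤ ∑' l : ℕ, ‖u ((k : ℤ) - l)‖ ^ 2 * (((l : ℝ) + κ) ^ 2 * ‖g l‖ ^ 2) :=
      tsum_nonneg fun l => by positivity
    calc M k ^ 2 ≤ (Real.sqrt (∑' l : ℕ, ‖u ((k : ℤ) - l)‖ ^ 2 * (((l : ℝ) + κ) ^ 2 * ‖g l‖ ^ 2))
          * Real.sqrt S) ^ 2 := by
          rw [hM]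
          exact pow_le_pow_left₀ (tsum_nonneg fun l => by positivity) hcs2 2
      _ = _ := by
          rw [mul_pow, Real.sq_sqrt h5, Real.sq_sqrt hS0]
  -- partial sums over k
  have hrange : ∀ N : ℕ, ∑ k ∈ Finset.range N, M k ^ 2 ≤ (1 / 4) * H := by
    intro N
    have hswap : ∑ k ∈ Finset.range N,
        (∑' l : ℕ, ‖u ((k : ℤ) - l)‖ ^ 2 * (((l : ℝ) + κ) ^ 2 * ‖g l‖ ^ 2))
        = ∑' l : ℕ, ∑ k ∈ Finset.range N,
            ‖u ((k : ℤ) - l)‖ ^ 2 * (((l : ℝ) + κ) ^ 2 * ‖g l‖ ^ 2) :=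
      (Summable.tsum_finsetSum (fun k _ => hcs k)).symm
    have hinner : ∀ l : ℕ,
        (∑ k ∈ Finset.range N, ‖u ((k : ℤ) - l)‖ ^ 2 * (((l : ℝ) + κ) ^ 2 * ‖g l‖ ^ 2))
          ≤ U * (((l : ℝ) + κ) ^ 2 * ‖f l‖ ^ 2) := by
      intro l
      have h1 : ∑ k ∈ Finset.range N, ‖u ((k : ℤ) - l)‖ ^ 2 ≤ U := by
        have himg : ∑ m ∈ (Finset.range N).image (fun k : ℕ => (k : ℤ) - l), ‖u m‖ ^ 2
            = ∑ k ∈ Finset.range N, ‖u ((k : ℤ) - l)‖ ^ 2 :=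
          Finset.sum_image (f := fun m : ℤ => ‖u m‖ ^ 2) (fun a _ b _ h => by omega)
        rw [← himg]
        exact Summable.sum_le_tsum _ (fun _ _ => sq_nonneg _) hu
      calc (∑ k ∈ Finset.range N, ‖u ((k : ℤ) - l)‖ ^ 2 * (((l : ℝ) + κ) ^ 2 * ‖g l‖ ^ 2))
          = (∑ k ∈ Finset.range N, ‖u ((k : ℤ) - l)‖ ^ 2) * (((l : ℝ) + κ) ^ 2 * ‖g l‖ ^ 2) :=
            (Finset.sum_mul _ _ _).symm
        _ ≤ U * (((l : ℝ) + κ) ^ 2 * ‖f l‖ ^ 2) := by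
            refine mul_le_mul h1 ?_ (by positivity) hU0
            exact mul_le_mul_of_nonneg_left
              (pow_le_pow_left₀ (norm_nonneg _) (hgle l) 2) (by positivity)
    have hsumN : Summable fun l : ℕ => ∑ k ∈ Finset.range N,
        ‖u ((k : ℤ) - l)‖ ^ 2 * (((l : ℝ) + κ) ^ 2 * ‖g l‖ ^ 2) :=
      Summable.of_nonneg_of_le (fun l => Finset.sum_nonneg fun k _ => by positivity)
        hinner (hf2.mul_left U)
    have h8 : 8 * U ≤ κ := by linarith
    calc ∑ k ∈ Finset.range N, M k ^ 2
        ≤ ∑ k ∈ Finset.range N,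
            (∑' l : ℕ, ‖u ((k : ℤ) - l)‖ ^ 2 * (((l : ℝ) + κ) ^ 2 * ‖g l‖ ^ 2)) * S :=
          Finset.sum_le_sum fun k _ => hQ k
      _ = (∑ k ∈ Finset.range N,
            (∑' l : ℕ, ‖u ((k : ℤ) - l)‖ ^ 2 * (((l : ℝ) + κ) ^ 2 * ‖g l‖ ^ 2))) * S :=
          (Finset.sum_mul _ _ _).symm
      _ ≤ (U * H) * S := by
          refine mul_le_mul_of_nonneg_right ?_ hS0
          rw [hswap]
          calc (∑' l : ℕ, ∑ k ∈ Finset.range N,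
                ‖u ((k : ℤ) - l)‖ ^ 2 * (((l : ℝ) + κ) ^ 2 * ‖g l‖ ^ 2))
              ≤ ∑' l : ℕ, U * (((l : ℝ) + κ) ^ 2 * ‖f l‖ ^ 2) :=
                Summable.tsum_le_tsum hinner hsumN (hf2.mul_left U)
            _ = U * H := tsum_mul_left
      _ ≤ (U * H) * (2 / κ) := mul_le_mul_of_nonneg_left hS2 (by positivity)
      _ ≤ (1 / 4) * H := by
          rw [show (U * H) * (2 / κ) = (2 * U * H) / κ by ring, div_le_iff₀ hκ0]
          nlinarith [mul_le_mul_of_nonneg_right h8 hH0]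
  have hMsq : Summable fun k => M k ^ 2 :=
    summable_of_sum_range_le (fun k => sq_nonneg _) hrange
  have hMts : (∑' k, M k ^ 2) ≤ (1 / 4) * H :=
    Real.tsum_le_of_sum_range_le (fun k => sq_nonneg _) hrange
  have hTle : ∀ k, ‖toepBO u n f k‖ ^ 2 ≤ M k ^ 2 :=
    fun k => pow_le_pow_left₀ (norm_nonneg _) (hT k) 2
  have hTs : Summable fun k => ‖toepBO u n f k‖ ^ 2 :=
    Summable.of_nonneg_of_le (fun k => sq_nonneg _) hTle hMsq
  exact ⟨hTs, le_trans (Summable.tsum_le_tsum hTle hTs hMsq) hMts⟩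

/-!
STATEMENT 6 (Proposition 4.5, estimate (22)): Let `u ∈ L²(𝕋)` be real-valued and
`1 ≤ n ≤ ∞`. With `κ₀ = max{12‖u‖²_{L²}, 1} ≥ 1`, for all `κ ≥ κ₀` and all `f ∈ H¹₊`:
`(1/2)‖f‖_{H¹_κ} ≤ ‖(L_n + κ)f‖_{L²} ≤ (3/2)‖f‖_{H¹_κ}`, where `L_n = -i∂ₓ - Π_n(u Π_n ·)`.
(Real-valuedness of `u` reads `û(-k) = conj(û(k))` on the Fourier side.)
-/
theorem stmt6 (u : ℤ → ℂ) (hu : Summable fun k : ℤ => ‖u k‖ ^ 2)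
    (hreal : ∀ k : ℤ, u (-k) = conj (u k)) :
    1 ≤ max (12 * l2norm u ^ 2) 1 ∧
    ∀ κ : ℝ, max (12 * l2norm u ^ 2) 1 ≤ κ →
      ∀ n : ℕ∞, 1 ≤ n → ∀ f : ℕ → ℂ, memH1 f →
        (1 / 2) * hnorm 1 κ f ≤ l2norm (LplusBO u n κ f) ∧
          l2norm (LplusBO u n κ f) ≤ (3 / 2) * hnorm 1 κ f := by

  refine ⟨le_max_right _ 1, ?_⟩
  intro κ hκmax n hn f hf
  have hκ1 : 1 ≤ κ := le_trans (le_max_right _ _) hκmax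
  have hκ0 : (0:ℝ) < κ := lt_of_lt_of_le one_pos hκ1
  have husq : l2norm u ^ 2 = ∑' m : ℤ, ‖u m‖ ^ 2 :=
    Real.sq_sqrt (tsum_nonneg fun _ => sq_nonneg _)
  have hκU : 12 * (∑' m : ℤ, ‖u m‖ ^ 2) ≤ κ := by
    rw [← husq]; exact le_trans (le_max_left _ _) hκmax
  have hf2 : Summable fun l : ℕ => ((l : ℝ) + κ) ^ 2 * ‖f l‖ ^ 2 := by
    refine Summable.of_nonneg_of_le (fun l => by positivity) (fun l => ?_)
      (hf.mul_left (κ ^ 2))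
    have h2 : ((l : ℝ) + κ) ^ 2 ≤ κ ^ 2 * ((l : ℝ) + 1) ^ 2 := by
      have h0 : (0:ℝ) ≤ (l : ℝ) := Nat.cast_nonneg l
      have h1 : ((l : ℝ) + κ) ≤ κ * ((l : ℝ) + 1) := by nlinarith
      calc ((l : ℝ) + κ) ^ 2 ≤ (κ * ((l : ℝ) + 1)) ^ 2 :=
            pow_le_pow_left₀ (by linarith) h1 2
        _ = κ ^ 2 * ((l : ℝ) + 1) ^ 2 := by ring
    calc ((l : ℝ) + κ) ^ 2 * ‖f l‖ ^ 2 ≤ (κ ^ 2 * ((l : ℝ) + 1) ^ 2) * ‖f l‖ ^ 2 :=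
          mul_le_mul_of_nonneg_right h2 (sq_nonneg _)
      _ = κ ^ 2 * (((l : ℝ) + 1) ^ 2 * ‖f l‖ ^ 2) := by ring
  obtain ⟨hTs, hTle⟩ := aux_key u hu κ hκ1 hκU n f hf2
  set T := toepBO u n f with hTdef
  set A : ℕ → ℂ := fun k => ((k : ℂ) + κ) * f k with hAdef
  have hA : ∀ k : ℕ, ‖A k‖ ^ 2 = ((k : ℝ) + κ) ^ 2 * ‖f k‖ ^ 2 := by
    intro k
    have hpos : (0:ℝ) ≤ (k : ℝ) + κ := by positivity
    have hc : ((k : ℂ) + (κ : ℂ)) = ((((k : ℝ) + κ) : ℝ) : ℂ) := by push_cast; ring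
    show ‖((k : ℂ) + (κ : ℂ)) * f k‖ ^ 2 = _
    rw [norm_mul, hc, Complex.norm_real, Real.norm_eq_abs, abs_of_nonneg hpos, mul_pow]
  have hAsum : Summable fun k => ‖A k‖ ^ 2 := by
    refine hf2.congr fun k => ?_
    rw [hA k]
  have hAl2 : l2norm A = Real.sqrt (∑' l : ℕ, ((l : ℝ) + κ) ^ 2 * ‖f l‖ ^ 2) := by
    unfold l2norm; rw [tsum_congr hA]
  have hhn : hnorm 1 κ f = l2norm A := by
    unfold hnorm; rw [hAl2]
    congr 1
    refine tsum_congr fun k => ?_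
    congr 1
    rw [show (2 * (1:ℝ)) = ((2:ℕ):ℝ) by norm_num, Real.rpow_natCast]
  have hTnorm : l2norm T ≤ (1 / 2) * l2norm A := by
    show Real.sqrt (∑' k, ‖T k‖ ^ 2) ≤ _
    calc Real.sqrt (∑' k, ‖T k‖ ^ 2)
        ≤ Real.sqrt ((1 / 4) * ∑' l : ℕ, ((l : ℝ) + κ) ^ 2 * ‖f l‖ ^ 2) :=
          Real.sqrt_le_sqrt hTle
      _ = (1 / 2) * Real.sqrt (∑' l : ℕ, ((l : ℝ) + κ) ^ 2 * ‖f l‖ ^ 2) := by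
          rw [Real.sqrt_mul (by norm_num), show Real.sqrt (1 / 4 : ℝ) = 1 / 2 by
            rw [show (1 / 4 : ℝ) = (1 / 2) ^ 2 by norm_num, Real.sqrt_sq (by norm_num)]]
      _ = (1 / 2) * l2norm A := by rw [hAl2]
  have hL : LplusBO u n κ f = fun k => A k - T k := rfl
  have hnegT : Summable fun k => ‖(-T k : ℂ)‖ ^ 2 := by simpa using hTs
  have hsub : Summable fun k => ‖A k - T k‖ ^ 2 := by
    have h := aux_add_summable A (fun k => -T k) hAsum hnegT
    refine h.congr fun k => ?_
    rw [sub_eq_add_neg]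
  have hTri1 : l2norm (fun k => A k - T k) ≤ l2norm A + l2norm T := by
    have h := aux_l2_tri A (fun k => -T k) hAsum hnegT
    have e1 : (fun k => A k + -T k) = fun k => A k - T k := by
      funext k; rw [← sub_eq_add_neg]
    have e2 : l2norm (fun k => -T k) = l2norm T := by unfold l2norm; simp
    rw [e1, e2] at h; exact h
  have hTri2 : l2norm A ≤ l2norm (fun k => A k - T k) + l2norm T := by
    have h := aux_l2_tri (fun k => A k - T k) T hsub hTs
    have e1 : (fun k => (A k - T k) + T k) = A := by funext k; ring
    rw [e1] at h; exact h
  constructor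
  · rw [hhn, hL]; linarith
  · rw [hhn, hL]; linarith
end
end
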